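/- Let d(n) be the number of nondecreasing Dyck words of semilength n and let r(n) be the sum, over all nondecreasing Dyck words of semilength n, of the number of returns. Then r(n)/d(n) converges, as n → ∞, to (3 + √5)/2; that is, the average degree of the root of a random Elena tree with n+1 nodes tends to (3 + √5)/2. -/

import Mathlib

/-- Height of the prefix of length `i` of the word `w`
(`true` = U-step, `false` = D-step): number of U's minus number of D's. -/
def prefixHeight (w : List Bool) (i : ℕ) : ℤ :=
  ((w.take i).count true : ℤ) - ((w.take i).count false : ℤ)

/-- `w` is a Dyck word: every prefix has nonnegative height and the whole word
has height 0 (equally many U's and D's). -/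
def IsDyckWord (w : List Bool) : Prop :=
  (∀ i, i ≤ w.length → 0 ≤ prefixHeight w i) ∧ prefixHeight w w.length = 0

/-- A valley at (0-based) position `i`: a D-step immediately followed by a U-step. -/
def IsValley (w : List Bool) (i : ℕ) : Prop :=
  w[i]? = some false ∧ w[i + 1]? = some true

/-- A nondecreasing Dyck word: a Dyck word whose valley altitudes, read left to
right, form a nondecreasing sequence.  The altitude of a valley at position `i`
is the height of the prefix ending at that D-step, i.e. of length `i + 1`. -/
def IsNondecDyck (w : List Bool) : Prop :=
  IsDyckWord w ∧ ∀ i j, IsValley w i → IsValley w j → i ≤ j →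
    prefixHeight w (i + 1) ≤ prefixHeight w (j + 1)

/-- The set of nondecreasing Dyck words of semilength `n`. -/
def nondecDyck (n : ℕ) : Set (List Bool) :=
  {w | w.length = 2 * n ∧ IsNondecDyck w}

/-- `d n` = number of nondecreasing Dyck words of semilength `n`. -/
noncomputable def numNondecDyck (n : ℕ) : ℕ := (nondecDyck n).ncard

/-- Number of returns of `w`: indices `1 ≤ i ≤ |w|` where the prefix of length
`i` has height `0`. -/
def numReturns (w : List Bool) : ℕ :=
  ((Finset.Icc 1 w.length).filter fun i => prefixHeight w i = 0).card

/-- `r n`: total number of returns over all nondecreasing Dyck words of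
semilength `n`. -/
noncomputable def totalReturns (n : ℕ) : ℕ :=
  ∑ᶠ w ∈ nondecDyck n, numReturns w

/-!
Cut a nondecreasing Dyck word of semilength `n + 1` at its first return, `w = U u D v` with
`u`, `v` Dyck. If `v` is empty, `u` is any nondecreasing Dyck word of semilength `n`. Otherwise
the valley at the cut has altitude `0`, whereas valleys inside `U u D` have altitude `≥ 1`; so
`U u D` has no valley at all, i.e. it is a pyramid `U^k D^k`, and `v` is any nonempty
nondecreasing Dyck word. Since the returns of `U u D v` are the last step of `U u D` and the
returns of `v`, this gives
`d(n+1) = d(n) + ∑_{j<n} d(j+1)` and `r(n+1) = d(n+1) + ∑_{j<n} r(j+1)`, whence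
`d(n+1) = F(2n+1)` and `r(n+1) = F(2n+3) - 2^n`. As `F(m+2)/F(m) → φ²` and `2^n = o(φ^{2n})`,
`r(n)/d(n) → φ² = (3 + √5)/2`.
-/

open Finset

variable {w u v x y : List Bool} {i n : ℕ}

section PrefixHeight

@[simp] lemma prefixHeight_zero (w : List Bool) : prefixHeight w 0 = 0 := by
  simp [prefixHeight]

lemma prefixHeight_cons_succ (b : Bool) (w : List Bool) (i : ℕ) :
    prefixHeight (b :: w) (i + 1) = (if b then 1 else -1) + prefixHeight w i := by
  cases b <;> simp [prefixHeight] <;> ring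

lemma prefixHeight_append_of_le (y : List Bool) (h : i ≤ x.length) :
    prefixHeight (x ++ y) i = prefixHeight x i := by
  simp [prefixHeight, List.take_append_of_le_length h]

lemma prefixHeight_append_length_add (x y : List Bool) (i : ℕ) :
    prefixHeight (x ++ y) (x.length + i) = prefixHeight x x.length + prefixHeight y i := by
  simp only [prefixHeight, List.take_append, List.take_length, Nat.add_sub_cancel_left,
    List.take_of_length_le (Nat.le_add_right _ _), List.count_append]
  push_cast
  ring

end PrefixHeight

section Elevate

def elevate (w : List Bool) : List Bool := true :: (w ++ [false])

@[simp] lemma length_elevate (w : List Bool) : (elevate w).length = w.length + 2 := by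
  simp [elevate]

lemma elevate_injective : Function.Injective elevate := fun _ _ h =>
  List.append_cancel_right (List.cons_injective h)

lemma prefixHeight_elevate_succ (h : i ≤ w.length) :
    prefixHeight (elevate w) (i + 1) = 1 + prefixHeight w i := by
  rw [elevate, prefixHeight_cons_succ, prefixHeight_append_of_le _ h, if_pos rfl]

lemma prefixHeight_elevate_length (w : List Bool) :
    prefixHeight (elevate w) (w.length + 2) = prefixHeight w w.length := by
  rw [elevate, prefixHeight_cons_succ, prefixHeight_append_length_add]
  simp [prefixHeight]

end Elevate

section Dyck

lemma IsDyckWord.nil : IsDyckWord [] :=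
  ⟨fun _ _ => by simp [prefixHeight], by simp [prefixHeight]⟩

lemma isDyckWord_append_iff (hx : prefixHeight x x.length = 0) :
    IsDyckWord (x ++ y) ↔ IsDyckWord x ∧ IsDyckWord y := by
  have hright : ∀ i, prefixHeight (x ++ y) (x.length + i) = prefixHeight y i := fun i => by
    rw [prefixHeight_append_length_add, hx, zero_add]
  constructor
  · rintro ⟨hpos, htot⟩
    refine ⟨⟨fun i hi => ?_, hx⟩, ⟨fun i hi => ?_, ?_⟩⟩
    · rw [← prefixHeight_append_of_le y hi]
      exact hpos i (by rw [List.length_append]; omega)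
    · rw [← hright]
      exact hpos _ (by simpa using hi)
    · rwa [List.length_append, hright] at htot
  · rintro ⟨⟨hxpos, -⟩, ⟨hypos, hytot⟩⟩
    refine ⟨fun i hi => ?_, by rw [List.length_append, hright, hytot]⟩
    rcases le_or_gt i x.length with hix | hix
    · rw [prefixHeight_append_of_le y hix]
      exact hxpos i hix
    · obtain ⟨k, rfl⟩ := Nat.exists_eq_add_of_lt hix
      rw [add_assoc, hright]
      exact hypos _ (by rw [List.length_append] at hi; omega)

lemma IsDyckWord.getElem?_zero (hw : IsDyckWord w) (hne : w ≠ []) : w[0]? = some true := by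
  obtain _ | ⟨a, t⟩ := w
  · contradiction
  have h := hw.1 1 (by simp)
  cases a
  · simp [prefixHeight_cons_succ] at h
  · rfl

lemma prefixHeight_elevate_pos (hw : IsDyckWord w) (h0 : 0 < i) (hi : i < w.length + 2) :
    0 < prefixHeight (elevate w) i := by
  obtain ⟨k, rfl⟩ := Nat.exists_eq_add_of_le' h0
  rw [prefixHeight_elevate_succ (by omega)]
  linarith [hw.1 k (by omega)]

lemma isDyckWord_elevate (hw : IsDyckWord w) : IsDyckWord (elevate w) := by
  refine ⟨fun i hi => ?_, by rw [length_elevate, prefixHeight_elevate_length, hw.2]⟩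
  rcases Nat.eq_zero_or_pos i with rfl | h0
  · simp
  rcases lt_or_eq_of_le (show i ≤ w.length + 2 by simpa using hi) with hi | rfl
  · exact (prefixHeight_elevate_pos hw h0 hi).le
  · rw [prefixHeight_elevate_length, hw.2]

lemma exists_eq_elevate_of_prefixHeight_pos (hx : IsDyckWord x) (hne : x ≠ [])
    (hpos : ∀ i, 0 < i → i < x.length → 0 < prefixHeight x i) :
    ∃ u, IsDyckWord u ∧ x = elevate u := by
  obtain _ | ⟨a, t⟩ := x
  · contradiction
  obtain rfl | ⟨u, b, rfl⟩ := t.eq_nil_or_concat'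
  · cases a <;> simp [IsDyckWord, prefixHeight] at hx
  have hlen : (a :: (u ++ [b])).length = u.length + 2 := by simp
  have hfirst := hpos 1 one_pos (by omega)
  have hlast := hpos (u.length + 1) (by omega) (by omega)
  have htot := hx.2
  rw [hlen] at htot
  simp only [prefixHeight_cons_succ, prefixHeight_zero, prefixHeight_append_of_le _ le_rfl,
    prefixHeight_append_length_add, add_zero] at hfirst hlast htot
  obtain rfl : a = true := by
    cases a
    · norm_num at hfirst
    · rfl
  obtain rfl : b = false := by
    cases b
    · rfl
    · simp only [↓reduceIte] at hlast htot
      omega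
  simp only [↓reduceIte, Bool.false_eq_true] at hlast htot
  refine ⟨u, ⟨fun i hi => ?_, by omega⟩, rfl⟩
  have h := hpos (i + 1) (by omega) (by omega)
  rw [← elevate, prefixHeight_elevate_succ hi] at h
  omega

lemma IsDyckWord.exists_eq_elevate_append (hw : IsDyckWord w) (hne : w ≠ []) :
    ∃ u v, IsDyckWord u ∧ IsDyckWord v ∧ w = elevate u ++ v := by
  have hex : ∃ k, 0 < k ∧ prefixHeight w k = 0 :=
    ⟨w.length, List.length_pos_iff.2 hne, hw.2⟩
  set k := Nat.find hex
  obtain ⟨hk0, hkw⟩ := Nat.find_spec hex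
  have hkle : k ≤ w.length := Nat.find_min' hex ⟨List.length_pos_iff.2 hne, hw.2⟩
  have hsplit := List.take_append_drop k w
  have hlen : (w.take k).length = k := List.length_take_of_le hkle
  have hheight : ∀ i ≤ k, prefixHeight (w.take k) i = prefixHeight w i := fun i hi => by
    rw [← prefixHeight_append_of_le (w.drop k) (by omega), hsplit]
  rw [← hsplit, isDyckWord_append_iff (by rw [hlen, hheight k le_rfl, hkw])] at hw
  obtain ⟨u, hu, hxu⟩ := exists_eq_elevate_of_prefixHeight_pos hw.1
    (by rw [← List.length_pos_iff, hlen]; exact hk0)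
    (fun i hi0 hik => by
      rw [hlen] at hik
      rw [hheight i hik.le]
      exact lt_of_le_of_ne ((hw.1.1 i (by omega)).trans_eq (hheight i hik.le))
        (Ne.symm fun h => Nat.find_min hex hik ⟨hi0, h⟩))
  exact ⟨u, w.drop k, hu, hw.2, by rw [← hxu, hsplit]⟩

lemma elevate_append_inj {u' v' : List Bool} (hu : IsDyckWord u) (hu' : IsDyckWord u')
    (h : elevate u ++ v = elevate u' ++ v') : u = u' ∧ v = v' := by
  have shorter : ∀ {u u' v v' : List Bool}, IsDyckWord u → IsDyckWord u' →
      elevate u ++ v = elevate u' ++ v' → ¬ u.length < u'.length := by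
    intro u u' v v' hu hu' h hlt
    have h2 := congrArg (prefixHeight · (u.length + 2)) h
    simp only [prefixHeight_append_of_le _ (le_of_eq (length_elevate u).symm),
      prefixHeight_append_of_le _
        (show u.length + 2 ≤ (elevate u').length by rw [length_elevate]; omega),
      prefixHeight_elevate_length, hu.2] at h2
    exact (prefixHeight_elevate_pos hu' (by omega) (by omega)).ne h2
  have hlen : u.length = u'.length :=
    le_antisymm (not_lt.mp (shorter hu' hu h.symm)) (not_lt.mp (shorter hu hu' h))
  obtain ⟨he, hv⟩ := List.append_inj h (by simp [hlen])
  exact ⟨elevate_injective he, hv⟩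

end Dyck

section Valleys

lemma IsValley.succ_lt_length (h : IsValley w i) : i + 1 < w.length :=
  (List.getElem?_eq_some_iff.1 h.2).1

lemma isValley_append_of_lt (h : i + 1 < x.length) : IsValley (x ++ y) i ↔ IsValley x i := by
  simp only [IsValley, List.getElem?_append_left h,
    List.getElem?_append_left (by omega : i < x.length)]

lemma isValley_append_length_add : IsValley (x ++ y) (x.length + i) ↔ IsValley y i := by
  simp only [IsValley, add_assoc, List.getElem?_append_right (Nat.le_add_right _ _),
    Nat.add_sub_cancel_left]

lemma IsValley.of_append (h : IsValley (x ++ y) i) :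
    IsValley x i ∨ i + 1 = x.length ∨ ∃ j, i = x.length + j ∧ IsValley y j := by
  rcases lt_trichotomy (i + 1) x.length with hi | hi | hi
  · exact .inl ((isValley_append_of_lt hi).1 h)
  · exact .inr (.inl hi)
  · obtain ⟨j, rfl⟩ := Nat.exists_eq_add_of_le (show x.length ≤ i by omega)
    exact .inr (.inr ⟨j, rfl, isValley_append_length_add.1 h⟩)

lemma isValley_elevate_iff : IsValley (elevate w) i ↔ ∃ j, i = j + 1 ∧ IsValley w j := by
  constructor
  · intro h
    obtain _ | j := i
    · simp [IsValley, elevate] at h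
    refine ⟨j, rfl, ?_⟩
    change IsValley (w ++ [false]) j at h
    rcases h.of_append with hw | hj | ⟨k, -, hk⟩
    · exact hw
    · have h2 := h.2
      rw [hj, List.getElem?_append_right le_rfl] at h2
      simp at h2
    · simpa using hk.succ_lt_length
  · rintro ⟨j, rfl, h⟩
    exact (isValley_append_of_lt h.succ_lt_length).2 h

lemma isValley_elevate_append (hv : v[0]? = some true) :
    IsValley (elevate u ++ v) (u.length + 1) := by
  refine ⟨by simp [elevate], ?_⟩
  simp only [elevate, List.cons_append, List.append_assoc, List.getElem?_cons_succ]
  rw [List.getElem?_append_right (by omega)]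
  simpa using hv

end Valleys

section ValleysMonotone

/-- `IsNondecDyck w` is definitionally `IsDyckWord w ∧ ValleysMonotone w`. -/
def ValleysMonotone (w : List Bool) : Prop :=
  ∀ i j, IsValley w i → IsValley w j → i ≤ j →
    prefixHeight w (i + 1) ≤ prefixHeight w (j + 1)

lemma valleysMonotone_elevate_iff : ValleysMonotone (elevate w) ↔ ValleysMonotone w := by
  have altitude : ∀ {j}, IsValley w j →
      prefixHeight (elevate w) (j + 1 + 1) = 1 + prefixHeight w (j + 1) := fun hj =>
    prefixHeight_elevate_succ hj.succ_lt_length.le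
  constructor
  · intro h i j hi hj hij
    have := h (i + 1) (j + 1) (isValley_elevate_iff.2 ⟨i, rfl, hi⟩)
      (isValley_elevate_iff.2 ⟨j, rfl, hj⟩) (by omega)
    rw [altitude hi, altitude hj] at this
    linarith
  · intro h i j hi hj hij
    obtain ⟨i', rfl, hi'⟩ := isValley_elevate_iff.1 hi
    obtain ⟨j', rfl, hj'⟩ := isValley_elevate_iff.1 hj
    rw [altitude hi', altitude hj']
    linarith [h i' j' hi' hj' (by omega)]

/-- Appending a nonempty Dyck word `v` creates a valley of altitude `0` at the junction, which
must come after every valley of `U u D`, all of altitude `≥ 1`. -/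
lemma valleysMonotone_elevate_append_iff (hu : IsDyckWord u) (hv : IsDyckWord v) (hv0 : v ≠ []) :
    ValleysMonotone (elevate u ++ v) ↔ (∀ i, ¬ IsValley u i) ∧ ValleysMonotone v := by
  have hlen : (elevate u).length = u.length + 2 := length_elevate u
  have hjunction := isValley_elevate_append (u := u) (hv.getElem?_zero hv0)
  have hjunction_alt : prefixHeight (elevate u ++ v) (u.length + 1 + 1) = 0 := by
    rw [prefixHeight_append_of_le _ hlen.ge, prefixHeight_elevate_length, hu.2]
  have hright_alt : ∀ j, prefixHeight (elevate u ++ v) (u.length + 2 + j + 1) =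
      prefixHeight v (j + 1) := fun j => by
    rw [add_assoc, ← hlen, prefixHeight_append_length_add, (isDyckWord_elevate hu).2, zero_add]
  have hright : ∀ {j}, IsValley (elevate u ++ v) (u.length + 2 + j) ↔ IsValley v j := by
    intro j; rw [← hlen]; exact isValley_append_length_add
  constructor
  · intro h
    refine ⟨fun i hi => ?_, fun i j hi hj hij => ?_⟩
    · have hlt := hi.succ_lt_length
      have := h (i + 1) (u.length + 1)
        ((isValley_append_of_lt (by omega)).2 (isValley_elevate_iff.2 ⟨i, rfl, hi⟩))
        hjunction (by omega)
      rw [hjunction_alt, prefixHeight_append_of_le _ (by omega),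
        prefixHeight_elevate_succ hlt.le] at this
      linarith [hu.1 (i + 1) hlt.le]
    · have := h _ _ (hright.2 hi) (hright.2 hj) (by omega)
      rwa [hright_alt, hright_alt] at this
  · rintro ⟨hnone, hmono⟩
    have hcases : ∀ {i}, IsValley (elevate u ++ v) i →
        i = u.length + 1 ∨ ∃ j, i = u.length + 2 + j ∧ IsValley v j := by
      intro i hi
      rcases hi.of_append with hi | hi | ⟨j, rfl, hj⟩
      · obtain ⟨k, -, hk⟩ := isValley_elevate_iff.1 hi
        exact absurd hk (hnone k)
      · exact .inl (by omega)
      · exact .inr ⟨j, by rw [hlen], hj⟩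
    intro i j hi hj hij
    rcases hcases hi with rfl | ⟨i', rfl, hi'⟩ <;>
      rcases hcases hj with rfl | ⟨j', rfl, hj'⟩
    · exact le_rfl
    · rw [hjunction_alt, hright_alt]
      exact hv.1 _ hj'.succ_lt_length.le
    · omega
    · rw [hright_alt, hright_alt]
      exact hmono i' j' hi' hj' (by omega)

end ValleysMonotone

section Pyramid

/-- `U^m D^m`. -/
def pyramid : ℕ → List Bool
  | 0 => []
  | m + 1 => elevate (pyramid m)

@[simp] lemma length_pyramid (m : ℕ) : (pyramid m).length = 2 * m := by
  induction m with
  | zero => rfl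
  | succ m ih => rw [pyramid, length_elevate, ih]; ring

lemma isDyckWord_pyramid (m : ℕ) : IsDyckWord (pyramid m) := by
  induction m with
  | zero => exact IsDyckWord.nil
  | succ m ih => exact isDyckWord_elevate ih

lemma not_isValley_pyramid (m i : ℕ) : ¬ IsValley (pyramid m) i := by
  induction m generalizing i with
  | zero => simp [IsValley, pyramid]
  | succ m ih =>
    rintro h
    obtain ⟨j, -, hj⟩ := isValley_elevate_iff.1 h
    exact ih j hj

lemma IsDyckWord.exists_eq_pyramid (hw : IsDyckWord w) (hvalley : ∀ i, ¬ IsValley w i) :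
    ∃ m, w = pyramid m := by
  induction hlen : w.length using Nat.strong_induction_on generalizing w with
  | _ n ih =>
    rcases eq_or_ne w [] with rfl | hne
    · exact ⟨0, rfl⟩
    obtain ⟨u, v, hu, hv, rfl⟩ := hw.exists_eq_elevate_append hne
    obtain rfl : v = [] := by
      by_contra hv0
      exact hvalley _ (isValley_elevate_append (hv.getElem?_zero hv0))
    rw [List.append_nil] at hvalley hlen ⊢
    obtain ⟨m, rfl⟩ := ih u.length (by simp [← hlen]) hu
      (fun i hi => hvalley (i + 1) (isValley_elevate_iff.2 ⟨i, rfl, hi⟩)) rfl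
    exact ⟨m + 1, rfl⟩

end Pyramid

lemma mem_nondecDyck_succ_iff : w ∈ nondecDyck (n + 1) ↔
    (∃ u ∈ nondecDyck n, elevate u = w) ∨
      ∃ m < n, ∃ v ∈ nondecDyck (n - m), elevate (pyramid m) ++ v = w := by
  constructor
  · rintro ⟨hlen, hdyck, hmono⟩
    obtain ⟨u, v, hu, hv, rfl⟩ := hdyck.exists_eq_elevate_append (by rintro rfl; simp at hlen)
    rcases eq_or_ne v [] with rfl | hv0
    · rw [List.append_nil, length_elevate] at hlen
      rw [List.append_nil] at hmono ⊢
      exact .inl ⟨u, ⟨by omega, hu, valleysMonotone_elevate_iff.1 hmono⟩, rfl⟩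
    · obtain ⟨hnone, hvmono⟩ := (valleysMonotone_elevate_append_iff hu hv hv0).1 hmono
      obtain ⟨m, rfl⟩ := hu.exists_eq_pyramid hnone
      have hvlen : v.length ≠ 0 := by simpa using hv0
      rw [List.length_append, length_elevate, length_pyramid] at hlen
      exact .inr ⟨m, by omega, v, ⟨by omega, hv, hvmono⟩, rfl⟩
  · rintro (⟨u, ⟨hlen, hu, hmono⟩, rfl⟩ | ⟨m, hm, v, ⟨hlen, hv, hmono⟩, rfl⟩)
    · exact ⟨by rw [length_elevate, hlen]; ring, isDyckWord_elevate hu,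
        valleysMonotone_elevate_iff.2 hmono⟩
    · have hv0 : v ≠ [] := by rintro rfl; rw [List.length_nil] at hlen; omega
      have hp := isDyckWord_elevate (isDyckWord_pyramid m)
      refine ⟨by rw [List.length_append, length_elevate, length_pyramid, hlen]; omega,
        (isDyckWord_append_iff hp.2).2 ⟨hp, hv⟩,
        (valleysMonotone_elevate_append_iff (isDyckWord_pyramid m) hv hv0).2
          ⟨not_isValley_pyramid m, hmono⟩⟩

section Returns

lemma numReturns_append (hx : prefixHeight x x.length = 0) :
    numReturns (x ++ y) = numReturns x + numReturns y := by
  have hsplit : Icc 1 (x.length + y.length) =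
      Icc 1 x.length ∪ (Icc 1 y.length).map (addLeftEmbedding x.length) := by
    have hIoc : ∀ n, Icc 1 n = Ioc 0 n := Icc_add_one_left_eq_Ioc 0
    rw [hIoc, hIoc, hIoc, map_add_left_Ioc, add_zero,
      Ioc_union_Ioc_eq_Ioc (Nat.zero_le _) (Nat.le_add_right _ _)]
  have hdisj : Disjoint (Icc 1 x.length) ((Icc 1 y.length).map (addLeftEmbedding x.length)) := by
    rw [Finset.disjoint_left]
    intro i hi hi'
    simp only [mem_Icc, mem_map, addLeftEmbedding_apply] at hi hi'
    obtain ⟨j, hj, rfl⟩ := hi'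
    omega
  rw [numReturns, List.length_append, hsplit, filter_union,
    card_union_of_disjoint (disjoint_filter_filter hdisj), filter_map, card_map]
  congr 2
  · exact filter_congr fun i hi => by rw [prefixHeight_append_of_le y (mem_Icc.1 hi).2]
  · ext i
    simp [prefixHeight_append_length_add, hx]

lemma numReturns_elevate (hu : IsDyckWord u) : numReturns (elevate u) = 1 := by
  rw [numReturns, card_eq_one]
  refine ⟨u.length + 2, ?_⟩
  ext i
  simp only [mem_filter, mem_Icc, length_elevate, mem_singleton]
  constructor
  · rintro ⟨⟨hi0, hi⟩, hzero⟩
    by_contra hne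
    exact (prefixHeight_elevate_pos hu hi0 (by omega)).ne' hzero
  · rintro rfl
    exact ⟨⟨by omega, le_rfl⟩, by rw [prefixHeight_elevate_length, hu.2]⟩

end Returns

section Counting

lemma nondecDyck_finite (n : ℕ) : (nondecDyck n).Finite :=
  (List.finite_length_eq Bool (2 * n)).subset fun _ hw => hw.1

noncomputable def nondecDyckFinset (n : ℕ) : Finset (List Bool) := (nondecDyck_finite n).toFinset

@[simp] lemma mem_nondecDyckFinset : w ∈ nondecDyckFinset n ↔ w ∈ nondecDyck n :=
  Set.Finite.mem_toFinset _

lemma numNondecDyck_eq_card (n : ℕ) : numNondecDyck n = #(nondecDyckFinset n) :=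
  Set.ncard_eq_toFinset_card _ _

lemma totalReturns_eq_sum (n : ℕ) :
    totalReturns n = ∑ w ∈ nondecDyckFinset n, numReturns w := by
  rw [totalReturns, ← Set.Finite.coe_toFinset (nondecDyck_finite n), finsum_mem_coe_finset]
  rfl

lemma numNondecDyck_zero : numNondecDyck 0 = 1 := by
  rw [numNondecDyck, Set.ncard_eq_one]
  refine ⟨[], Set.eq_singleton_iff_unique_mem.2
    ⟨⟨rfl, IsDyckWord.nil, ?_⟩, fun w hw => ?_⟩⟩
  · simp [IsValley]
  · simpa using hw.1

lemma nondecDyckFinset_succ (n : ℕ) : nondecDyckFinset (n + 1) =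
    (nondecDyckFinset n).image elevate ∪
      (range n).biUnion fun m => (nondecDyckFinset (n - m)).image (elevate (pyramid m) ++ ·) := by
  ext w
  simp [mem_nondecDyck_succ_iff]

lemma disjoint_image_elevate_biUnion (n : ℕ) : Disjoint ((nondecDyckFinset n).image elevate)
    ((range n).biUnion fun m => (nondecDyckFinset (n - m)).image (elevate (pyramid m) ++ ·)) := by
  simp only [Finset.disjoint_left, mem_image, mem_biUnion, mem_range, mem_nondecDyckFinset]
  rintro _ ⟨u, hu, rfl⟩ ⟨m, hm, v, hv, h⟩
  have hv0 : v ≠ [] := by rintro rfl; have := hv.1; rw [List.length_nil] at this; omega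
  exact hv0 (elevate_append_inj (isDyckWord_pyramid m) hu.2.1
    (h.trans (List.append_nil _).symm)).2

lemma pairwiseDisjoint_image_pyramid_append (n : ℕ) :
    (range n : Set ℕ).PairwiseDisjoint
      fun m => (nondecDyckFinset (n - m)).image (elevate (pyramid m) ++ ·) := by
  intro m _ m' _ hne
  simp only [Function.onFun, Finset.disjoint_left, mem_image]
  rintro _ ⟨v, -, rfl⟩ ⟨v', -, h⟩
  have := congrArg List.length
    (elevate_append_inj (isDyckWord_pyramid m') (isDyckWord_pyramid m) h).1
  simp only [length_pyramid] at this
  omega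

lemma sum_nondecDyckFinset_succ {M : Type*} [AddCommMonoid M] (f : List Bool → M) (n : ℕ) :
    ∑ w ∈ nondecDyckFinset (n + 1), f w = ∑ u ∈ nondecDyckFinset n, f (elevate u) +
      ∑ m ∈ range n, ∑ v ∈ nondecDyckFinset (n - m), f (elevate (pyramid m) ++ v) := by
  rw [nondecDyckFinset_succ, sum_union (disjoint_image_elevate_biUnion n),
    sum_biUnion (pairwiseDisjoint_image_pyramid_append n),
    sum_image elevate_injective.injOn]
  congr 1
  exact sum_congr rfl fun m _ => sum_image (List.append_right_injective _).injOn

lemma sum_range_reflect_succ {M : Type*} [AddCommMonoid M] (f : ℕ → M) (n : ℕ) :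
    ∑ m ∈ range n, f (n - m) = ∑ j ∈ range n, f (j + 1) := by
  rw [← sum_range_reflect (fun j => f (j + 1))]
  exact sum_congr rfl fun m hm => by rw [mem_range] at hm; congr 1; omega

lemma numNondecDyck_succ (n : ℕ) :
    numNondecDyck (n + 1) = numNondecDyck n + ∑ j ∈ range n, numNondecDyck (j + 1) := by
  rw [← sum_range_reflect_succ]
  simp only [numNondecDyck_eq_card, card_eq_sum_ones]
  exact sum_nondecDyckFinset_succ _ n

lemma totalReturns_succ (n : ℕ) :
    totalReturns (n + 1) = numNondecDyck (n + 1) + ∑ j ∈ range n, totalReturns (j + 1) := by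
  rw [numNondecDyck_succ, ← sum_range_reflect_succ, ← sum_range_reflect_succ, add_assoc,
    ← sum_add_distrib, totalReturns_eq_sum, sum_nondecDyckFinset_succ]
  congr 1
  · rw [numNondecDyck_eq_card, card_eq_sum_ones]
    exact sum_congr rfl fun u hu => numReturns_elevate (mem_nondecDyckFinset.1 hu).2.1
  · refine sum_congr rfl fun m _ => ?_
    have hp := isDyckWord_pyramid m
    rw [numNondecDyck_eq_card, card_eq_sum_ones, totalReturns_eq_sum, ← sum_add_distrib]
    exact sum_congr rfl fun v _ => by
      rw [numReturns_append (isDyckWord_elevate hp).2, numReturns_elevate hp]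

end Counting

section ClosedForms

open Nat

lemma sum_range_fib_two_mul_add_one (n : ℕ) :
    ∑ j ∈ range n, fib (2 * j + 1) = fib (2 * n) := by
  induction n with
  | zero => simp
  | succ n ih =>
    rw [sum_range_succ, ih, show 2 * (n + 1) = 2 * n + 2 by ring, fib_add_two]

lemma numNondecDyck_succ_eq_fib (n : ℕ) : numNondecDyck (n + 1) = fib (2 * n + 1) := by
  induction n using Nat.strong_induction_on with
  | _ n ih =>
    rw [numNondecDyck_succ, sum_congr rfl fun j hj => ih j (mem_range.1 hj),
      sum_range_fib_two_mul_add_one]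
    rcases n with _ | n
    · simp [numNondecDyck_zero]
    · rw [ih n n.lt_succ_self, show 2 * (n + 1) + 1 = 2 * n + 1 + 2 by ring, fib_add_two,
        show 2 * (n + 1) = 2 * n + 1 + 1 by ring]

lemma sum_range_totalReturns_succ_add_two_pow (n : ℕ) :
    ∑ j ∈ range n, totalReturns (j + 1) + 2 ^ n = fib (2 * n + 2) := by
  induction n with
  | zero => simp
  | succ n ih =>
    have hr := totalReturns_succ n
    rw [numNondecDyck_succ_eq_fib] at hr
    have h3 : fib (2 * n + 3) = fib (2 * n + 1) + fib (2 * n + 2) := fib_add_two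
    have h4 : fib (2 * (n + 1) + 2) = fib (2 * n + 2) + fib (2 * n + 3) := fib_add_two
    rw [sum_range_succ, pow_succ, h4]
    omega

lemma totalReturns_succ_add_two_pow (n : ℕ) :
    totalReturns (n + 1) + 2 ^ n = fib (2 * n + 3) := by
  rw [totalReturns_succ, add_assoc, sum_range_totalReturns_succ_add_two_pow,
    numNondecDyck_succ_eq_fib, ← fib_add_two]

end ClosedForms

section Limit

open Filter Topology Real
open scoped goldenRatio

lemma goldenRatio_pow_le_two_mul_fib_succ (m : ℕ) : φ ^ m ≤ 2 * Nat.fib (m + 1) := by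
  have hmono : (Nat.fib m : ℝ) ≤ Nat.fib (m + 1) := by exact_mod_cast Nat.fib_le_fib_succ
  have hfib : (0 : ℝ) ≤ Nat.fib m := by positivity
  rw [← fib_succ_sub_goldenConj_mul_fib]
  nlinarith [neg_one_lt_goldenConj, goldenConj_neg]

lemma tendsto_fib_add_two_div_fib :
    Tendsto (fun n => (Nat.fib (n + 2) / Nat.fib n : ℝ)) atTop (𝓝 (φ ^ 2)) := by
  have h := (tendsto_fib_succ_div_fib_atTop.comp (tendsto_add_atTop_nat 1)).mul
    tendsto_fib_succ_div_fib_atTop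
  rw [← sq] at h
  refine h.congr' (eventually_atTop.2 ⟨1, fun n hn => ?_⟩)
  have h0 : (Nat.fib n : ℝ) ≠ 0 := by exact_mod_cast (Nat.fib_pos.2 hn).ne'
  have h1 : (Nat.fib (n + 1) : ℝ) ≠ 0 := by exact_mod_cast (Nat.fib_pos.2 n.succ_pos).ne'
  simp only [Function.comp_apply]
  field_simp

lemma tendsto_two_pow_div_fib_two_mul_add_one :
    Tendsto (fun n => (2 ^ n / Nat.fib (2 * n + 1) : ℝ)) atTop (𝓝 0) := by
  have hratio : 2 / φ ^ 2 < 1 := by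
    rw [div_lt_one (by positivity), goldenRatio_sq]
    linarith [one_lt_goldenRatio]
  have hgeom := (tendsto_pow_atTop_nhds_zero_of_lt_one (by positivity) hratio).const_mul 2
  rw [mul_zero] at hgeom
  refine squeeze_zero (fun n => by positivity) (fun n => ?_) hgeom
  have hfib : (0 : ℝ) < Nat.fib (2 * n + 1) := by exact_mod_cast Nat.fib_pos.2 (by omega)
  have hle := goldenRatio_pow_le_two_mul_fib_succ (2 * n)
  rw [pow_mul] at hle
  calc (2 ^ n / Nat.fib (2 * n + 1) : ℝ) ≤ 2 ^ n / ((φ ^ 2) ^ n / 2) :=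
        div_le_div_of_nonneg_left (by positivity) (by positivity) (by linarith)
    _ = 2 * (2 / φ ^ 2) ^ n := by rw [div_pow, div_div_eq_mul_div]; ring

end Limit

/-- `r(n)/d(n) → (3 + √5)/2` as `n → ∞`: the average degree of the root of a
random Elena tree tends to `(3 + √5)/2`. -/
theorem avg_root_degree :
    Filter.Tendsto
      (fun n : ℕ => (totalReturns n : ℝ) / (numNondecDyck n : ℝ))
      Filter.atTop (nhds ((3 + Real.sqrt 5) / 2)) := by
  have hratio : ∀ n : ℕ, (totalReturns (n + 1) : ℝ) / numNondecDyck (n + 1) =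
      Nat.fib (2 * n + 1 + 2) / Nat.fib (2 * n + 1) - 2 ^ n / Nat.fib (2 * n + 1) := fun n => by
    rw [← sub_div, ← totalReturns_succ_add_two_pow, numNondecDyck_succ_eq_fib]
    push_cast
    ring
  have hlimit : Real.goldenRatio ^ 2 - 0 = (3 + Real.sqrt 5) / 2 := by
    rw [sub_zero, Real.goldenRatio_sq]
    ring
  have hodd : Filter.Tendsto (fun n : ℕ => 2 * n + 1) Filter.atTop Filter.atTop :=
    Filter.tendsto_atTop_mono (fun n => show n ≤ 2 * n + 1 by omega) Filter.tendsto_id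
  rw [← Filter.tendsto_add_atTop_iff_nat 1, funext hratio, ← hlimit]
  exact (tendsto_fib_add_two_div_fib.comp hodd).sub tendsto_two_pow_div_fib_two_mul_add_one
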